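/- Let k ≥ 2 be an integer, let G be a graph, and for each d ≥ 0 let n_d denote the number of vertices of G of degree d. Define ε*_k as follows: if there exists an integer D ≥ k+1 with (k+1)·∑_{d=k+1}^{D} n_d ≥ n_1, let D* be the smallest such integer and set ε*_k = 2/((k+1)(D*+1)); otherwise set ε*_k = 0. Then the function t_{G,k} : [0, 2/((k+1)(k+2))] → ℝ given by t_{G,k}(ε) = ∑_{v ∈ V(G)} f_{k,ε}(d(v)) attains its maximum at ε = ε*_k. -/

import Mathlib

set_option maxHeartbeats 1000000


/-- The lower-bound function f_{k,ε} for forests of caterpillars of maximum degree at most k. -/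
noncomputable def fCk (k : ℕ) (ε : ℝ) (d : ℕ) : ℝ :=
  if d = 0 then 1
  else if d = 1 then 1 - ε
  else if d ≤ k then 2 / ((d : ℝ) + 1)
  else min (((k : ℝ) + 1) * ε) (2 / ((d : ℝ) + 1))

private lemma fCk_sum_fiber {V : Type} [Fintype V] [DecidableEq V] (G : SimpleGraph V)
    [DecidableRel G.Adj] (k : ℕ) (ε : ℝ) (n : ℕ → ℕ)
    (hn : ∀ d, n d = (Finset.univ.filter (fun v => G.degree v = d)).card)
    (M : ℕ) (hM : Fintype.card V ≤ M) :
    ∑ v, fCk k ε (G.degree v) = ∑ d ∈ Finset.range M, (n d : ℝ) * fCk k ε d := by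
  have hmaps : ∀ v ∈ (Finset.univ : Finset V), G.degree v ∈ Finset.range M :=
    fun v _ => Finset.mem_range.mpr (lt_of_lt_of_le (G.degree_lt_card_verts v) hM)
  rw [← Finset.sum_fiberwise_of_maps_to hmaps]
  refine Finset.sum_congr rfl fun d _ => ?_
  calc ∑ v ∈ Finset.univ.filter (fun v => G.degree v = d), fCk k ε (G.degree v)
      = ∑ _v ∈ Finset.univ.filter (fun v => G.degree v = d), fCk k ε d := by
        refine Finset.sum_congr rfl fun v hv => ?_
        rw [(Finset.mem_filter.mp hv).2]
    _ = (n d : ℝ) * fCk k ε d := by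
        rw [Finset.sum_const, hn d, nsmul_eq_mul]

private lemma key_red (k : ℕ) (hk : 2 ≤ k) (n : ℕ → ℕ) (M : ℕ) (hM : 2 ≤ M) (ε ε' : ℝ)
    (h : 0 ≤ (n 1 : ℝ) * (ε - ε') +
      ∑ d ∈ Finset.Ico (k+1) M, (n d : ℝ) *
        (min (((k:ℝ)+1)*ε') (2/((d:ℝ)+1)) - min (((k:ℝ)+1)*ε) (2/((d:ℝ)+1)))) :
    ∑ d ∈ Finset.range M, (n d : ℝ) * fCk k ε d
      ≤ ∑ d ∈ Finset.range M, (n d : ℝ) * fCk k ε' d := by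
  rw [← sub_nonneg, ← Finset.sum_sub_distrib]
  have hsplit : ∀ d ∈ Finset.range M,
      (n d : ℝ) * fCk k ε' d - (n d : ℝ) * fCk k ε d
        = (if d = 1 then (n 1 : ℝ) * (ε - ε') else 0)
          + (if k+1 ≤ d then (n d : ℝ) *
              (min (((k:ℝ)+1)*ε') (2/((d:ℝ)+1)) - min (((k:ℝ)+1)*ε) (2/((d:ℝ)+1))) else 0) := by
    intro d _
    by_cases h0 : d = 0
    · subst h0; simp [fCk, show ¬ k+1 ≤ 0 by omega]
    by_cases h1 : d = 1
    · subst h1; simp [fCk, show ¬ k+1 ≤ 1 by omega]; ring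
    by_cases h2 : d ≤ k
    · simp [fCk, h0, h1, h2, show ¬ k+1 ≤ d by omega]
    · simp [fCk, h0, h1, h2, show k+1 ≤ d by omega]; ring
  rw [Finset.sum_congr rfl hsplit, Finset.sum_add_distrib]
  have h1mem : (1 : ℕ) ∈ Finset.range M := Finset.mem_range.mpr (by omega)
  rw [Finset.sum_ite_eq' (Finset.range M) 1 (fun _ => (n 1 : ℝ) * (ε - ε')), if_pos h1mem]
  have hfil : (Finset.range M).filter (fun d => k+1 ≤ d) = Finset.Ico (k+1) M := by
    ext x; simp [Finset.mem_Ico]; omega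
  rw [← Finset.sum_filter, hfil]
  exact h

private lemma min_sub_min_le (b b' c : ℝ) (h : b' ≤ b) : min b c - min b' c ≤ b - b' := by
  simp only [min_def]; split_ifs <;> linarith

/-- The function t_{G,k}(ε) = ∑_v f_{k,ε}(d(v)) on [0, 2/((k+1)(k+2))] attains its
maximum at ε*_k, where ε*_k = 2/((k+1)(D*+1)) with D* the smallest integer D ≥ k+1
such that (k+1)·∑_{d=k+1}^{D} n_d ≥ n_1 if such D exists, and ε*_k = 0 otherwise.
Here n_d is the number of vertices of G of degree d. -/
theorem stmt12 {V : Type} [Fintype V] [DecidableEq V] (G : SimpleGraph V)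
    [DecidableRel G.Adj] (k : ℕ) (hk : 2 ≤ k)
    (n : ℕ → ℕ)
    (hn : ∀ d, n d = (Finset.univ.filter (fun v => G.degree v = d)).card)
    (εstar : ℝ)
    (hεstar₁ : ∀ Dstar : ℕ,
      IsLeast {D : ℕ | k + 1 ≤ D ∧ n 1 ≤ (k + 1) * ∑ d ∈ Finset.Icc (k+1) D, n d} Dstar →
      εstar = 2 / (((k : ℝ) + 1) * ((Dstar : ℝ) + 1)))
    (hεstar₂ : (¬ ∃ D : ℕ, k + 1 ≤ D ∧ n 1 ≤ (k + 1) * ∑ d ∈ Finset.Icc (k+1) D, n d) →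
      εstar = 0) :
    (0 ≤ εstar ∧ εstar ≤ 2 / (((k : ℝ) + 1) * ((k : ℝ) + 2))) ∧
    ∀ ε : ℝ, 0 ≤ ε → ε ≤ 2 / (((k : ℝ) + 1) * ((k : ℝ) + 2)) →
      ∑ v, fCk k ε (G.degree v) ≤ ∑ v, fCk k εstar (G.degree v) := by
  have hk1 : (0:ℝ) < (k:ℝ) + 1 := by positivity
  by_cases hex : ∃ D : ℕ, k + 1 ≤ D ∧ n 1 ≤ (k + 1) * ∑ d ∈ Finset.Icc (k+1) D, n d
  · -- D* exists
    have hD : IsLeast {D : ℕ | k + 1 ≤ D ∧ n 1 ≤ (k + 1) * ∑ d ∈ Finset.Icc (k+1) D, n d}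
        (Nat.find hex) := ⟨Nat.find_spec hex, fun x hx => Nat.find_min' hex hx⟩
    have he := hεstar₁ _ hD
    set D := Nat.find hex with hDdef
    have hDk : k + 1 ≤ D := hD.1.1
    have hDcast : ((k:ℝ)) + 2 ≤ (D:ℝ) + 1 := by
      have : (k+1 : ℝ) ≤ (D : ℝ) := by exact_mod_cast hDk
      linarith
    have hD1 : (0:ℝ) < (D:ℝ) + 1 := by positivity
    have hbound : 0 ≤ εstar ∧ εstar ≤ 2 / (((k : ℝ) + 1) * ((k : ℝ) + 2)) := by
      constructor
      · rw [he]; positivity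
      · rw [he, div_le_div_iff₀ (by positivity) (by positivity)]
        nlinarith
    refine ⟨hbound, fun ε hε0 hεM => ?_⟩
    set M : ℕ := Fintype.card V + D + 2 with hMdef
    rw [fCk_sum_fiber G k ε n hn M (by omega), fCk_sum_fiber G k εstar n hn M (by omega)]
    apply key_red k hk n M (by omega)
    have hkε : ((k:ℝ)+1) * εstar = 2 / ((D:ℝ)+1) := by
      rw [he]; field_simp
    rcases le_or_gt ε εstar with hle | hgt
    · -- ε ≤ ε*
      have step1 : ∀ d ∈ Finset.Ico (k+1) M,
          (if d ≤ D then (n d : ℝ) * (((k:ℝ)+1)*(εstar - ε)) else 0)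
            ≤ (n d : ℝ) * (min (((k:ℝ)+1)*εstar) (2/((d:ℝ)+1))
                - min (((k:ℝ)+1)*ε) (2/((d:ℝ)+1))) := by
        intro d hd
        have hd1 : (0:ℝ) < (d:ℝ) + 1 := by positivity
        by_cases hdD : d ≤ D
        · rw [if_pos hdD]
          have hcd : 2 / ((D:ℝ)+1) ≤ 2 / ((d:ℝ)+1) := by
            have hdc : (d:ℝ) ≤ (D:ℝ) := by exact_mod_cast hdD
            gcongr
          have h1 : ((k:ℝ)+1)*εstar ≤ 2/((d:ℝ)+1) := by rw [hkε]; exact hcd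
          have h2 : ((k:ℝ)+1)*ε ≤ ((k:ℝ)+1)*εstar := by nlinarith
          rw [min_eq_left h1, min_eq_left (h2.trans h1)]
          apply le_of_eq; ring
        · rw [if_neg hdD]
          have h2 : ((k:ℝ)+1)*ε ≤ ((k:ℝ)+1)*εstar := by nlinarith
          have := min_le_min h2 (le_refl (2/((d:ℝ)+1)))
          have hnd : (0:ℝ) ≤ (n d : ℝ) := Nat.cast_nonneg _
          nlinarith
      have hsum := Finset.sum_le_sum step1
      have hfil : (Finset.Ico (k+1) M).filter (fun d => d ≤ D) = Finset.Icc (k+1) D := by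
        ext x; simp [Finset.mem_Ico, Finset.mem_Icc]; omega
      rw [← Finset.sum_filter, hfil, ← Finset.sum_mul] at hsum
      have hn1 : (n 1 : ℝ) ≤ ((k:ℝ)+1) * ∑ d ∈ Finset.Icc (k+1) D, (n d : ℝ) := by
        have := hD.1.2
        push_cast
        exact_mod_cast this
      have hεs : 0 ≤ εstar - ε := by linarith
      nlinarith [mul_nonneg hεs (sub_nonneg.mpr hn1)]
    · -- ε* < ε
      have step1 : ∀ d ∈ Finset.Ico (k+1) M,
          (if d < D then (n d : ℝ) * (-(((k:ℝ)+1)*(ε - εstar))) else 0)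
            ≤ (n d : ℝ) * (min (((k:ℝ)+1)*εstar) (2/((d:ℝ)+1))
                - min (((k:ℝ)+1)*ε) (2/((d:ℝ)+1))) := by
        intro d hd
        have hd1 : (0:ℝ) < (d:ℝ) + 1 := by positivity
        have h2 : ((k:ℝ)+1)*εstar ≤ ((k:ℝ)+1)*ε := by nlinarith
        by_cases hdD : d < D
        · rw [if_pos hdD]
          have hlip := min_sub_min_le (((k:ℝ)+1)*ε) (((k:ℝ)+1)*εstar) (2/((d:ℝ)+1)) h2
          have hnd : (0:ℝ) ≤ (n d : ℝ) := Nat.cast_nonneg _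
          nlinarith
        · rw [if_neg hdD]
          have hDd : D ≤ d := by omega
          have hcd : 2 / ((d:ℝ)+1) ≤ 2 / ((D:ℝ)+1) := by
            have hdc : (D:ℝ) ≤ (d:ℝ) := by exact_mod_cast hDd
            gcongr
          have h1 : 2/((d:ℝ)+1) ≤ ((k:ℝ)+1)*εstar := by rw [hkε]; exact hcd
          rw [min_eq_right h1, min_eq_right (h1.trans h2)]
          simp
      have hsum := Finset.sum_le_sum step1
      have hfil : (Finset.Ico (k+1) M).filter (fun d => d < D) = Finset.Ico (k+1) D := by
        ext x; simp [Finset.mem_Ico]; omega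
      rw [← Finset.sum_filter, hfil, ← Finset.sum_mul] at hsum
      have hn1 : ((k:ℝ)+1) * ∑ d ∈ Finset.Ico (k+1) D, (n d : ℝ) ≤ (n 1 : ℝ) := by
        have hnat : (k+1) * (∑ d ∈ Finset.Ico (k+1) D, n d) ≤ n 1 := by
          rcases Nat.eq_or_lt_of_le hDk with hEq | hLt
          · rw [← hEq]; simp
          · have hmem := Nat.find_min hex (m := D - 1) (by omega)
            push_neg at hmem
            have hIcc : Finset.Icc (k+1) (D-1) = Finset.Ico (k+1) D := by
              ext x; simp [Finset.mem_Ico, Finset.mem_Icc]; omega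
            have := hmem (by omega)
            rw [hIcc] at this
            omega
        push_cast at hnat ⊢
        exact_mod_cast hnat
      have hεs : 0 ≤ ε - εstar := by linarith
      nlinarith [mul_nonneg hεs (sub_nonneg.mpr hn1)]
  · -- no D exists
    have he := hεstar₂ hex
    subst he
    have hbound : (0:ℝ) ≤ 0 ∧ (0:ℝ) ≤ 2 / (((k : ℝ) + 1) * ((k : ℝ) + 2)) :=
      ⟨le_refl 0, by positivity⟩
    refine ⟨hbound, fun ε hε0 hεM => ?_⟩
    set M : ℕ := Fintype.card V + k + 2 with hMdef
    rw [fCk_sum_fiber G k ε n hn M (by omega), fCk_sum_fiber G k 0 n hn M (by omega)]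
    apply key_red k hk n M (by omega)
    push_neg at hex
    have step1 : ∀ d ∈ Finset.Ico (k+1) M,
        (n d : ℝ) * (-(((k:ℝ)+1)*ε))
          ≤ (n d : ℝ) * (min (((k:ℝ)+1)*0) (2/((d:ℝ)+1))
              - min (((k:ℝ)+1)*ε) (2/((d:ℝ)+1))) := by
      intro d hd
      have hd1 : (0:ℝ) < (d:ℝ) + 1 := by positivity
      have hz : min (((k:ℝ)+1)*0) (2/((d:ℝ)+1)) = 0 := by
        rw [mul_zero, min_eq_left (by positivity)]
      rw [hz]
      have hmin : min (((k:ℝ)+1)*ε) (2/((d:ℝ)+1)) ≤ ((k:ℝ)+1)*ε := min_le_left _ _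
      have hnd : (0:ℝ) ≤ (n d : ℝ) := Nat.cast_nonneg _
      nlinarith
    have hsum := Finset.sum_le_sum step1
    rw [← Finset.sum_mul] at hsum
    have hn1 : ((k:ℝ)+1) * ∑ d ∈ Finset.Ico (k+1) M, (n d : ℝ) ≤ (n 1 : ℝ) := by
      have hnat : (k+1) * (∑ d ∈ Finset.Ico (k+1) M, n d) ≤ n 1 := by
        have := hex (M - 1) (by omega)
        have hIcc : Finset.Icc (k+1) (M-1) = Finset.Ico (k+1) M := by
          ext x; simp [Finset.mem_Ico, Finset.mem_Icc]; omega
        rw [hIcc] at this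
        omega
      push_cast at hnat ⊢
      exact_mod_cast hnat
    nlinarith [mul_nonneg hε0 (sub_nonneg.mpr hn1)]
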